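/- arXiv:0907.0175 — 3 statements merged into one kernel-verified Lean document; each statement's English description precedes it below -/
import Mathlib

section
/- Let A be a set of n positive real numbers such that |A+A| ≤ n^{1+δ}/(3 log n), where 0 < δ and n is sufficiently large. Then there exists a dyadic interval [x, 2x) containing at least n^{1-δ} elements of A. -/
open Finset Pointwise

/-! If every dyadic class of `A` has at most `M` elements, then `|A|² ≤ 4M|A+A|`. For each
occupied class `j` pick `c` in it: the translates `c + a`, with `a` in a class `≤ j`, are distinct
elements of `A+A` in class `j` or `j+1`, so `∑ⱼ #{a | log₂ a ≤ j} ≤ 2|A+A|`. Conversely, the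
elements `b ≥ a` of `A` lie in the classes `≥ log₂ a`, at most `M` per class; summing over `a` and
using `∑ₐ #{b | a ≤ b} ≥ |A|²/2` gives `∑ⱼ #{a | log₂ a ≤ j} ≥ |A|²/(2M)`. With `M = n^(1-δ)` the
hypothesis on `|A+A|` yields `n² ≤ 4n²/(3 log n)`, false once `log n > 4/3`. -/

namespace Finset

lemma card_sq_le_two_mul_sum_card_le {α : Type*} [LinearOrder α] (s : Finset α) :
    #s ^ 2 ≤ 2 * ∑ a ∈ s, #{b ∈ s | a ≤ b} := by
  have hcover : ∀ a ∈ s, #s ≤ #{b ∈ s | a ≤ b} + #{b ∈ s | b ≤ a} := fun a _ => by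
    rw [← card_filter_add_card_filter_not (s := s) (a ≤ ·)]
    gcongr
    exact fun h => (not_le.mp h).le
  have hswap : ∑ a ∈ s, #{b ∈ s | b ≤ a} = ∑ a ∈ s, #{b ∈ s | a ≤ b} :=
    sum_card_bipartiteAbove_eq_sum_card_bipartiteBelow (r := fun a b : α => b ≤ a)
  calc #s ^ 2 = ∑ _a ∈ s, #s := by simp [sq]
    _ ≤ ∑ a ∈ s, (#{b ∈ s | a ≤ b} + #{b ∈ s | b ≤ a}) := sum_le_sum hcover
    _ = 2 * ∑ a ∈ s, #{b ∈ s | a ≤ b} := by rw [sum_add_distrib, hswap, two_mul]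

lemma card_le_card_mul_of_card_fiber_le {α β R : Type*} [DecidableEq β] [Semiring R]
    [PartialOrder R] [IsOrderedRing R] {f : α → β} {s : Finset α} {t : Finset β}
    (hf : ∀ a ∈ s, f a ∈ t) {M : R} (hM : ∀ b ∈ t, (#{a ∈ s | f a = b} : R) ≤ M) :
    (#s : R) ≤ #t * M := by
  rw [card_eq_sum_card_fiberwise hf, Nat.cast_sum, ← nsmul_eq_mul, ← sum_const]
  exact sum_le_sum hM

end Finset

namespace Int

variable {R : Type*} [Semifield R] [LinearOrder R] [IsStrictOrderedRing R] [FloorSemiring R]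

lemma log_eq_iff {b : ℕ} (hb : 1 < b) {x : R} (hx : 0 < x) {j : ℤ} :
    log b x = j ↔ (b : R) ^ j ≤ x ∧ x < (b : R) ^ (j + 1) := by
  rw [zpow_le_iff_le_log hb hx, lt_zpow_iff_log_lt hb hx]
  omega

lemma log_two_add_eq_or_eq_add_one {a c : R} (ha : 0 < a) (hc : 0 < c)
    (hac : log 2 a ≤ log 2 c) :
    log 2 (c + a) = log 2 c ∨ log 2 (c + a) = log 2 c + 1 := by
  have hlow : log 2 c ≤ log 2 (c + a) := log_mono_right hc (le_add_of_nonneg_right ha.le)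
  have hpow : ∀ x : R, x < 2 ^ (log 2 x + 1) := by
    simpa using lt_zpow_succ_log_self (R := R) one_lt_two
  have hupp : c + a < (2 : ℕ) ^ (log 2 c + 2) := by
    have ha' : a < 2 ^ (log 2 c + 1) :=
      (hpow a).trans_le (zpow_le_zpow_right₀ one_le_two (by omega))
    have hdouble : (2 : R) ^ (log 2 c + 2) = 2 ^ (log 2 c + 1) + 2 ^ (log 2 c + 1) := by
      rw [show log 2 c + 2 = log 2 c + 1 + 1 by ring, zpow_add_one₀ two_ne_zero, mul_two]
    push_cast
    rw [hdouble]
    exact add_lt_add (hpow c) ha'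
  have := (lt_zpow_iff_log_lt one_lt_two (add_pos hc ha)).mp hupp
  omega

end Int

section Dyadic

variable {A : Finset ℝ}

theorem sum_card_log_le_le_two_mul_card_add (hA : ∀ a ∈ A, 0 < a) :
    ∑ j ∈ A.image (Int.log 2), #{a ∈ A | Int.log 2 a ≤ j} ≤ 2 * #(A + A) := by
  have hshift : ∀ j ∈ A.image (Int.log 2), #{a ∈ A | Int.log 2 a ≤ j} ≤
      #{s ∈ A + A | Int.log 2 s = j} + #{s ∈ A + A | Int.log 2 s - 1 = j} := by
    intro j hj
    obtain ⟨c, hc, rfl⟩ := mem_image.mp hj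
    calc #{a ∈ A | Int.log 2 a ≤ Int.log 2 c}
        ≤ #({s ∈ A + A | Int.log 2 s = Int.log 2 c} ∪
            {s ∈ A + A | Int.log 2 s - 1 = Int.log 2 c}) := by
          refine card_le_card_of_injOn (c + ·) (fun a ha => ?_) (add_right_injective c).injOn
          obtain ⟨haA, hac⟩ := mem_filter.mp ha
          have hmem := add_mem_add hc haA
          simp only [coe_union, coe_filter, Set.mem_union, Set.mem_ofPred_eq]
          rcases Int.log_two_add_eq_or_eq_add_one (hA a haA) (hA c hc) hac with h | h
          · exact Or.inl ⟨hmem, h⟩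
          · exact Or.inr ⟨hmem, by omega⟩
      _ ≤ _ := card_union_le _ _
  calc ∑ j ∈ A.image (Int.log 2), #{a ∈ A | Int.log 2 a ≤ j}
      ≤ ∑ j ∈ A.image (Int.log 2),
          (#{s ∈ A + A | Int.log 2 s = j} + #{s ∈ A + A | Int.log 2 s - 1 = j}) :=
        sum_le_sum hshift
    _ ≤ #(A + A) + #(A + A) := by
        rw [sum_add_distrib, sum_card_fiberwise_eq_card_filter, sum_card_fiberwise_eq_card_filter]
        exact add_le_add (card_filter_le _ _) (card_filter_le _ _)
    _ = 2 * #(A + A) := (two_mul _).symm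

theorem card_sq_le_mul_sum_card_log_le (hA : ∀ a ∈ A, 0 < a) {M : ℝ}
    (hM : ∀ j : ℤ, (#{a ∈ A | Int.log 2 a = j} : ℝ) ≤ M) :
    (#A : ℝ) ^ 2 ≤ 2 * M * ∑ j ∈ A.image (Int.log 2), #{a ∈ A | Int.log 2 a ≤ j} := by
  have hupper : ∀ a ∈ A,
      (#{b ∈ A | a ≤ b} : ℝ) ≤ #{j ∈ A.image (Int.log 2) | Int.log 2 a ≤ j} * M := by
    intro a ha
    refine card_le_card_mul_of_card_fiber_le (f := Int.log 2) (fun b hb => ?_) fun j _ => ?_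
    · obtain ⟨hbA, hab⟩ := mem_filter.mp hb
      exact mem_filter.mpr ⟨mem_image_of_mem _ hbA, Int.log_mono_right (hA a ha) hab⟩
    · exact le_trans (by gcongr; exact filter_subset _ _) (hM j)
  have hswap : ∑ a ∈ A, #{j ∈ A.image (Int.log 2) | Int.log 2 a ≤ j} =
      ∑ j ∈ A.image (Int.log 2), #{a ∈ A | Int.log 2 a ≤ j} :=
    sum_card_bipartiteAbove_eq_sum_card_bipartiteBelow _
  calc (#A : ℝ) ^ 2 ≤ 2 * ∑ a ∈ A, (#{b ∈ A | a ≤ b} : ℝ) := by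
        exact_mod_cast card_sq_le_two_mul_sum_card_le A
    _ ≤ 2 * ∑ a ∈ A, (#{j ∈ A.image (Int.log 2) | Int.log 2 a ≤ j} * M) := by
        gcongr with a ha
        exact hupper a ha
    _ = 2 * M * ∑ j ∈ A.image (Int.log 2), #{a ∈ A | Int.log 2 a ≤ j} := by
        rw [← sum_mul, ← hswap]
        push_cast
        ring

theorem card_sq_le_four_mul_mul_card_add (hA : ∀ a ∈ A, 0 < a) {M : ℝ}
    (hM : ∀ j : ℤ, (#{a ∈ A | Int.log 2 a = j} : ℝ) ≤ M) :
    (#A : ℝ) ^ 2 ≤ 4 * M * #(A + A) := by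
  have hM0 : 0 ≤ M := (Nat.cast_nonneg _).trans (hM 0)
  calc (#A : ℝ) ^ 2 ≤ 2 * M * ∑ j ∈ A.image (Int.log 2), #{a ∈ A | Int.log 2 a ≤ j} :=
        card_sq_le_mul_sum_card_log_le hA hM
    _ ≤ 2 * M * (2 * #(A + A)) := by
        gcongr
        exact_mod_cast sum_card_log_le_le_two_mul_card_add hA
    _ = 4 * M * #(A + A) := by ring

end Dyadic

theorem stmt1_general (δ : ℝ) :
    ∃ n₀ : ℕ, ∀ (A : Finset ℝ) (n : ℕ), A.card = n → n₀ < n →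
      (∀ a ∈ A, 0 < a) →
      ((A + A).card : ℝ) ≤ (n : ℝ) ^ (1 + δ) / (3 * Real.log n) →
      ∃ j : ℤ, (n : ℝ) ^ (1 - δ) ≤
        ((A.filter (fun a => (2 : ℝ) ^ j ≤ a ∧ a < 2 ^ (j + 1))).card : ℝ) := by
  refine ⟨3, fun A n hcard hn hA hsumset => ?_⟩
  by_contra! hsparse
  have hM : ∀ j : ℤ, (#{a ∈ A | Int.log 2 a = j} : ℝ) ≤ (n : ℝ) ^ (1 - δ) := fun j => by
    rw [filter_congr fun a ha => by
      simpa only [Nat.cast_ofNat] using Int.log_eq_iff (j := j) one_lt_two (hA a ha)]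
    exact (hsparse j).le
  have hn0 : (0 : ℝ) < n := by positivity
  have hlog : 4 / 3 < Real.log n := calc
    (4 / 3 : ℝ) < 2 * Real.log 2 := by linarith [Real.log_two_gt_d9]
    _ = Real.log 4 := by rw [show (4 : ℝ) = 2 ^ 2 by norm_num, Real.log_pow]; norm_num
    _ ≤ Real.log n := Real.log_le_log (by norm_num) (by exact_mod_cast hn)
  have hpow : (n : ℝ) ^ (1 - δ) * (n : ℝ) ^ (1 + δ) = (n : ℝ) ^ 2 := by
    rw [← Real.rpow_add hn0, ← Real.rpow_natCast]
    norm_num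
  have hsq := card_sq_le_four_mul_mul_card_add hA hM
  rw [hcard] at hsq
  have hlt : 4 / (3 * Real.log n) < 1 := by rw [div_lt_one (by linarith)]; linarith
  have := calc (n : ℝ) ^ 2 ≤ 4 * (n : ℝ) ^ (1 - δ) * #(A + A) := hsq
    _ ≤ 4 * (n : ℝ) ^ (1 - δ) * ((n : ℝ) ^ (1 + δ) / (3 * Real.log n)) := by gcongr
    _ = (n : ℝ) ^ 2 * (4 / (3 * Real.log n)) := by rw [← hpow]; ring
    _ < (n : ℝ) ^ 2 := mul_lt_of_lt_one_right (by positivity) hlt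
  exact lt_irrefl _ this

/-- If `A` is a set of `n` positive reals with `|A+A| ≤ n^(1+δ)/(3 log n)` and `n`
is sufficiently large, then some dyadic interval `[2^j, 2^(j+1))` contains at least
`n^(1-δ)` elements of `A`. -/
theorem stmt1 (δ : ℝ) (hδ : 0 < δ) :
    ∃ n₀ : ℕ, ∀ (A : Finset ℝ) (n : ℕ), A.card = n → n₀ < n →
      (∀ a ∈ A, 0 < a) →
      ((A + A).card : ℝ) ≤ (n : ℝ) ^ (1 + δ) / (3 * Real.log n) →
      ∃ j : ℤ, (n : ℝ) ^ (1 - δ) ≤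
        ((A.filter (fun a => (2 : ℝ) ^ j ≤ a ∧ a < 2 ^ (j + 1))).card : ℝ) :=
  stmt1_general δ
end

section
/- Let A = {x+1, x+2, ..., x+n} with x ≥ n^3. Then for every pair a = x+j, b = x+k in A there exist perturbations δ_{a,b}, δ'_{a,b} ∈ [−1, 1] such that the perturbed product set P = {(a + δ_{a,b})(b + δ'_{a,b}) : a, b ∈ A} satisfies |P| ≤ 2n − 1, and hence |A+A| + |P| ≤ 4n − 2. -/
/-!
Perturb only the first factor, shifting `a` by `(a - b)² / (4b)`: this turns the product `ab`
into `((a + b) / 2)²`, so the perturbed product set is the image of `A + A` under `s ↦ s² / 4`.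
For `A = {x + 1, …, x + n}` the shift is at most `n² / (4x) ≤ 1`, and `|A + A| ≤ 2n - 1`.
-/

open Finset Pointwise

noncomputable def squareShift (a b : ℝ) : ℝ := (a - b) ^ 2 / (4 * b)

theorem add_squareShift_mul {a b : ℝ} (hb : b ≠ 0) :
    (a + squareShift a b) * b = (a + b) ^ 2 / 4 := by
  unfold squareShift
  field_simp
  ring

theorem abs_squareShift_le_one {a b : ℝ} (hb : 0 < b) (hab : (a - b) ^ 2 ≤ 4 * b) :
    |squareShift a b| ≤ 1 := by
  unfold squareShift
  rw [abs_of_nonneg (by positivity), div_le_one (by positivity)]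
  exact hab

theorem image_product_add_squareShift_mul {A : Finset ℝ} (hA : (0 : ℝ) ∉ A) :
    (A ×ˢ A).image (fun p => (p.1 + squareShift p.1 p.2) * p.2) =
      (A + A).image (fun s => s ^ 2 / 4) := by
  rw [← image_add_product, image_image]
  refine image_congr fun p hp => ?_
  have hp2 : p.2 ≠ 0 := fun h => hA (h ▸ (mem_product.1 hp).2)
  exact add_squareShift_mul hp2

section ArithmeticProgression

variable (n : ℕ) (x : ℝ)

theorem card_add_image_Icc_le :
    ((Icc 1 n).image (fun j : ℕ => x + j) + (Icc 1 n).image (fun j : ℕ => x + j)).card ≤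
      2 * n - 1 := by
  have hsub : (Icc 1 n).image (fun j : ℕ => x + j) + (Icc 1 n).image (fun j : ℕ => x + j) ⊆
      (Icc 2 (2 * n)).image (fun m : ℕ => 2 * x + m) := by
    simp only [subset_iff, mem_add, mem_image, mem_Icc]
    rintro _ ⟨_, ⟨j, ⟨hj1, hjn⟩, rfl⟩, _, ⟨k, ⟨hk1, hkn⟩, rfl⟩, rfl⟩
    exact ⟨j + k, ⟨by omega, by omega⟩, by push_cast; ring⟩
  calc _ ≤ ((Icc 2 (2 * n)).image (fun m : ℕ => 2 * x + m)).card := card_le_card hsub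
    _ ≤ (Icc 2 (2 * n)).card := card_image_le
    _ = 2 * n - 1 := by rw [Nat.card_Icc]; omega

variable {n x}

theorem pos_of_mem_image_Icc (hx : 0 ≤ x) {b : ℝ}
    (hb : b ∈ (Icc 1 n).image (fun j : ℕ => x + j)) : 0 < b := by
  obtain ⟨k, hk, rfl⟩ := mem_image.1 hb
  have : (1 : ℝ) ≤ k := by exact_mod_cast (mem_Icc.1 hk).1
  linarith

theorem abs_squareShift_le_one_of_mem_image_Icc (hx : (n : ℝ) ^ 3 ≤ x) {a b : ℝ}
    (ha : a ∈ (Icc 1 n).image (fun j : ℕ => x + j))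
    (hb : b ∈ (Icc 1 n).image (fun j : ℕ => x + j)) :
    |squareShift a b| ≤ 1 := by
  have hb0 := pos_of_mem_image_Icc (le_trans (by positivity) hx) hb
  simp only [mem_image, mem_Icc] at ha hb
  obtain ⟨j, ⟨hj1, hjn⟩, rfl⟩ := ha
  obtain ⟨k, ⟨hk1, hkn⟩, rfl⟩ := hb
  have hj : (1 : ℝ) ≤ j ∧ (j : ℝ) ≤ n := ⟨by exact_mod_cast hj1, by exact_mod_cast hjn⟩
  have hk : (1 : ℝ) ≤ k ∧ (k : ℝ) ≤ n := ⟨by exact_mod_cast hk1, by exact_mod_cast hkn⟩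
  have hjk : (x + j - (x + k)) ^ 2 ≤ (n : ℝ) ^ 2 := by
    rw [add_sub_add_left_eq_sub]
    exact sq_le_sq' (by linarith) (by linarith)
  have hn : (0 : ℝ) ≤ n := by positivity
  apply abs_squareShift_le_one hb0
  nlinarith

end ArithmeticProgression

theorem stmt9_general (n : ℕ) (x : ℝ) (hx : (n : ℝ) ^ 3 ≤ x)
    (A : Finset ℝ) (hA : A = (Finset.Icc 1 n).image (fun j : ℕ => x + (j : ℝ))) :
    ∃ δ δ' : ℝ → ℝ → ℝ,
      (∀ a ∈ A, ∀ b ∈ A, |δ a b| ≤ 1 ∧ |δ' a b| ≤ 1) ∧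
      ∀ P : Finset ℝ,
        P = (A ×ˢ A).image
          (fun p => (p.1 + δ p.1 p.2) * (p.2 + δ' p.1 p.2)) →
        P.card ≤ 2 * n - 1 ∧ (A + A).card + P.card ≤ 4 * n - 2 := by
  subst hA
  have hx0 : 0 ≤ x := le_trans (by positivity) hx
  refine ⟨squareShift, fun _ _ => 0,
    fun a ha b hb => ⟨abs_squareShift_le_one_of_mem_image_Icc hx ha hb, by simp⟩,
    fun P hP => ?_⟩
  have hsum := card_add_image_Icc_le n x
  have hP : P.card ≤ 2 * n - 1 := by
    simp only [add_zero] at hP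
    rw [hP, image_product_add_squareShift_mul fun h => (pos_of_mem_image_Icc hx0 h).ne rfl]
    exact card_image_le.trans hsum
  omega

/-- For `A = {x+1, ..., x+n}` with `x ≥ n³`, there exist perturbations in `[-1,1]`
making the perturbed product set have at most `2n - 1` elements, so that
`|A+A| + |P| ≤ 4n - 2`. -/
theorem stmt9 (n : ℕ) (hn : 1 ≤ n) (x : ℝ) (hx : (n : ℝ) ^ 3 ≤ x)
    (A : Finset ℝ) (hA : A = (Finset.Icc 1 n).image (fun j : ℕ => x + (j : ℝ))) :
    ∃ δ δ' : ℝ → ℝ → ℝ,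
      (∀ a ∈ A, ∀ b ∈ A, |δ a b| ≤ 1 ∧ |δ' a b| ≤ 1) ∧
      ∀ P : Finset ℝ,
        P = (A ×ˢ A).image
          (fun p => (p.1 + δ p.1 p.2) * (p.2 + δ' p.1 p.2)) →
        P.card ≤ 2 * n - 1 ∧ (A + A).card + P.card ≤ 4 * n - 2 :=
  stmt9_general n x hx A hA
end

section
/- For x ≥ 4n^2 and the set A = {x+1, ..., x+n}, for every a, b ∈ A there exists δ_{a,b} with |δ_{a,b}| ≤ C n^2/x (for an absolute constant C) such that (a + δ_{a,b})·b = x^2(1 + (j+k)/x), where j = a − x and k = b − x. Consequently the perturbed product set {(a+δ_{a,b})b : a,b ∈ A} is contained in the arithmetic progression {x^2 + (m)x : m = 2, ..., 2n} and has at most 2n−1 elements. -/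
open Finset

/-!
For `a = x + j` and `b = x + k` the perturbation `δ = x²(1 + (j+k)/x)/b − a` simplifies to
`−jk/(x+k)`, so `|δ| ≤ n²/x`. The perturbed product `(a + δ)b = x² + (j+k)x` then only depends on
`j + k ∈ {2, …, 2n}`, so the perturbed product set lies in an arithmetic progression of
`2n − 1` terms.
-/

noncomputable def collapsingPerturbation (x a b : ℝ) : ℝ :=
  x ^ 2 * (1 + ((a - x) + (b - x)) / x) / b - a

lemma add_collapsingPerturbation_mul {x a b : ℝ} (hb : b ≠ 0) :
    (a + collapsingPerturbation x a b) * b = x ^ 2 * (1 + ((a - x) + (b - x)) / x) := by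
  unfold collapsingPerturbation
  field_simp
  ring

lemma collapsingPerturbation_add_add {x j k : ℝ} (hx : x ≠ 0) (hk : x + k ≠ 0) :
    collapsingPerturbation x (x + j) (x + k) = -(j * k) / (x + k) := by
  unfold collapsingPerturbation
  field_simp
  ring

lemma abs_collapsingPerturbation_add_add_le {x j k N : ℝ} (hx : 0 < x)
    (hj : 0 ≤ j) (hjN : j ≤ N) (hk : 0 ≤ k) (hkN : k ≤ N) :
    |collapsingPerturbation x (x + j) (x + k)| ≤ N ^ 2 / x := by
  have hxk : 0 < x + k := by linarith
  rw [collapsingPerturbation_add_add hx.ne' hxk.ne', abs_div, abs_neg,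
    abs_of_nonneg (mul_nonneg hj hk), abs_of_pos hxk]
  calc j * k / (x + k) ≤ j * k / x := by gcongr; linarith
    _ ≤ N ^ 2 / x := by rw [sq]; gcongr; linarith

lemma sq_mul_one_add_div {x m : ℝ} (hx : x ≠ 0) : x ^ 2 * (1 + m / x) = x ^ 2 + m * x := by
  field_simp

/-- For `A = {x+1, ..., x+n}` with `x ≥ 4n²`, there are perturbations
`|δ_{a,b}| ≤ Cn²/x` (with `C` absolute) so that `(a+δ_{a,b})·b = x²(1+(j+k)/x)`
where `j = a - x`, `k = b - x`; hence the perturbed product set is contained in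
the arithmetic progression `{x² + mx : m = 2, ..., 2n}` and has at most `2n - 1`
elements. -/
theorem stmt18 :
    ∃ C : ℝ, 0 < C ∧
      ∀ (n : ℕ) (x : ℝ), 1 ≤ n → 4 * (n : ℝ) ^ 2 ≤ x →
      ∀ A : Finset ℝ, A = (Finset.Icc 1 n).image (fun j : ℕ => x + (j : ℝ)) →
      ∃ δ : ℝ → ℝ → ℝ,
        (∀ a ∈ A, ∀ b ∈ A,
          |δ a b| ≤ C * (n : ℝ) ^ 2 / x ∧
          (a + δ a b) * b = x ^ 2 * (1 + ((a - x) + (b - x)) / x)) ∧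
        ∀ P : Finset ℝ,
          P = (A ×ˢ A).image (fun p => (p.1 + δ p.1 p.2) * p.2) →
          P ⊆ (Finset.Icc 2 (2 * n)).image (fun m : ℕ => x ^ 2 + (m : ℝ) * x) ∧
          P.card ≤ 2 * n - 1 := by
  refine ⟨1, one_pos, fun n x hn hx A hA => ⟨collapsingPerturbation x, ?_⟩⟩
  have hx0 : 0 < x := lt_of_lt_of_le (by positivity) hx
  have hA' : ∀ a ∈ A, ∃ j ∈ Icc 1 n, x + (j : ℝ) = a := fun a ha => by simpa [hA] using ha
  have hprod : ∀ a ∈ A, ∀ b ∈ A, (a + collapsingPerturbation x a b) * b =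
      x ^ 2 * (1 + ((a - x) + (b - x)) / x) := fun a _ b hb => by
    obtain ⟨k, hk, rfl⟩ := hA' b hb
    exact add_collapsingPerturbation_mul (by positivity)
  refine ⟨fun a ha b hb => ⟨?_, hprod a ha b hb⟩, fun P hP => ?_⟩
  · obtain ⟨j, hj, rfl⟩ := hA' a ha
    obtain ⟨k, hk, rfl⟩ := hA' b hb
    rw [mem_Icc] at hj hk
    rw [one_mul]
    exact abs_collapsingPerturbation_add_add_le hx0 (by positivity) (by exact_mod_cast hj.2)
      (by positivity) (by exact_mod_cast hk.2)
  have hsub : P ⊆ (Icc 2 (2 * n)).image (fun m : ℕ => x ^ 2 + (m : ℝ) * x) := by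
    rw [hP]
    intro y hy
    obtain ⟨⟨a, b⟩, hab, rfl⟩ := mem_image.1 hy
    obtain ⟨ha, hb⟩ := mem_product.1 hab
    rw [hprod a ha b hb, sq_mul_one_add_div hx0.ne']
    obtain ⟨j, hj, rfl⟩ := hA' a ha
    obtain ⟨k, hk, rfl⟩ := hA' b hb
    rw [mem_Icc] at hj hk
    exact mem_image.2 ⟨j + k, mem_Icc.2 ⟨by omega, by omega⟩, by push_cast; ring⟩
  refine ⟨hsub, (card_le_card hsub).trans (card_image_le.trans ?_)⟩
  rw [Nat.card_Icc]
  omega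
end
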